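/- arXiv:1403.2545 — 10 statements merged into one kernel-verified Lean document; each statement's English description precedes it below -/
import Mathlib

section
/- Let m, n be real constants with n ≠ 0, let ε = 1 or ε = -1, let I ⊆ ℝ be an open interval, and let f, g : ℝ → ℝ be smooth with g nonvanishing on I. Let T : ℝ → ℝ be smooth with T'(t) = ε·g(t) on I. Suppose u : ℝ → ℝ → ℝ is smooth and positive on I × ℝ and satisfies ∂_t u + g(t) ∂_x(u^m) + f(t) ∂_x^3(u^n) = 0 on I × ℝ, and suppose v : ℝ → ℝ → ℝ is smooth with v(T(t), x) = u(t, x) for all t ∈ I, x ∈ ℝ. Then for every t ∈ I and x ∈ ℝ, at the point (T(t), x) one has ∂_τ v + ε ∂_y(v^m) + (ε f(t)/g(t)) ∂_y^3(v^n) = 0 (the derivatives of v being taken in its own variables (τ, y)). Thus the transformation t̃ = ε∫g dt, x̃ = x, ũ = u maps the class u_t + g(t)(u^m)_x + f(t)(u^n)_xxx = 0 into the class ũ_t̃ + ε(ũ^m)_x̃ + f̃(t̃)(ũ^n)_x̃x̃x̃ = 0 with f̃ ∘ T = ε f/g. -/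
open Real Filter Topology

noncomputable def pdT (u : ℝ → ℝ → ℝ) (t x : ℝ) : ℝ := deriv (fun s => u s x) t
noncomputable def pdX (u : ℝ → ℝ → ℝ) (t x : ℝ) : ℝ := deriv (fun y => u t y) x
noncomputable def pdX3 (u : ℝ → ℝ → ℝ) (t x : ℝ) : ℝ := deriv (deriv (deriv (fun y => u t y))) x

/-! The substitution only rescales time: `x` and `u` are unchanged, so the spatial derivatives of
`v` at `T t` are those of `u` at `t`, while the chain rule gives `u_t = v_τ · T' = ε g v_τ`.
Dividing the equation for `u` by `ε g` and using `ε² = 1` gives the equation for `v`. -/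

section PartialDerivatives

variable {u v : ℝ → ℝ → ℝ} {τ t x : ℝ}

theorem pdX_eq_of_slice_eq (h : ∀ y, v τ y = u t y) : pdX v τ x = pdX u t x := by
  unfold pdX
  rw [show (fun y => v τ y) = fun y => u t y from funext h]

theorem pdX3_eq_of_slice_eq (h : ∀ y, v τ y = u t y) : pdX3 v τ x = pdX3 u t x := by
  unfold pdX3
  rw [show (fun y => v τ y) = fun y => u t y from funext h]

theorem pdT_eq_pdT_comp_mul_deriv {T : ℝ → ℝ}
    (hv : DifferentiableAt ℝ (fun s => v s x) (T t)) (hT : DifferentiableAt ℝ T t)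
    (hvu : (fun s => v (T s) x) =ᶠ[𝓝 t] fun s => u s x) :
    pdT u t x = pdT v (T t) x * deriv T t := by
  unfold pdT
  rw [← hvu.deriv_eq]
  exact deriv_comp (h₂ := fun s => v s x) t hv hT

end PartialDerivatives

theorem add_mul_add_div_mul_eq_zero {a b c f g ε : ℝ} (hε : ε * ε = 1) (hg : g ≠ 0)
    (h : a * (ε * g) + g * b + f * c = 0) : a + ε * b + ε * f / g * c = 0 := by
  field_simp
  linear_combination ε * h - a * g * hε

theorem reduction_general_class_to_epsilon_class_general
    (m n : ℝ) (ε : ℝ) (hε : ε = 1 ∨ ε = -1)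
    (I : Set ℝ) (hIopen : IsOpen I)
    (f g : ℝ → ℝ)
    (hg0 : ∀ t ∈ I, g t ≠ 0)
    (T : ℝ → ℝ) (hT : ContDiff ℝ (⊤ : ℕ∞) T) (hT' : ∀ t ∈ I, deriv T t = ε * g t)
    (u : ℝ → ℝ → ℝ)
    (hupde : ∀ t ∈ I, ∀ x : ℝ,
      pdT u t x + g t * pdX (fun t x => u t x ^ m) t x
        + f t * pdX3 (fun t x => u t x ^ n) t x = 0)
    (v : ℝ → ℝ → ℝ) (hv : ContDiff ℝ (⊤ : ℕ∞) (Function.uncurry v))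
    (hvu : ∀ t ∈ I, ∀ x : ℝ, v (T t) x = u t x) :
    ∀ t ∈ I, ∀ x : ℝ,
      pdT v (T t) x + ε * pdX (fun τ y => v τ y ^ m) (T t) x
        + (ε * f t / g t) * pdX3 (fun τ y => v τ y ^ n) (T t) x = 0 := by
  intro t ht x
  have hv_slice : DifferentiableAt ℝ (fun s => v s x) (T t) := by
    exact (hv.differentiable (by simp) (T t, x)).comp (T t)
      (show DifferentiableAt ℝ (fun s : ℝ => (s, x)) (T t) from
        differentiableAt_id.prodMk (differentiableAt_const x))
  have hu_t : pdT u t x = pdT v (T t) x * (ε * g t) := by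
    rw [← hT' t ht]
    exact pdT_eq_pdT_comp_mul_deriv hv_slice (hT.differentiable (by simp) t)
      (eventually_of_mem (hIopen.mem_nhds ht) fun s hs => hvu s hs x)
  have hε_sq : ε * ε = 1 := by rcases hε with rfl | rfl <;> norm_num
  rw [pdX_eq_of_slice_eq (u := fun t x => u t x ^ m) fun y => by rw [hvu t ht y],
    pdX3_eq_of_slice_eq (u := fun t x => u t x ^ n) fun y => by rw [hvu t ht y]]
  exact add_mul_add_div_mul_eq_zero hε_sq (hg0 t ht) (hu_t ▸ hupde t ht x)

/-- Reduction of `u_t + g(t)(u^m)_x + f(t)(u^n)_xxx = 0` to the class with `g = ε`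
via `t̃ = ε ∫ g dt`, `x̃ = x`, `ũ = u`, with `f̃ ∘ T = ε f / g`. -/
theorem reduction_general_class_to_epsilon_class
    (m n : ℝ) (hn : n ≠ 0) (ε : ℝ) (hε : ε = 1 ∨ ε = -1)
    (I : Set ℝ) (hIopen : IsOpen I) (hIconn : I.OrdConnected)
    (f g : ℝ → ℝ) (hf : ContDiff ℝ (⊤ : ℕ∞) f) (hg : ContDiff ℝ (⊤ : ℕ∞) g)
    (hg0 : ∀ t ∈ I, g t ≠ 0)
    (T : ℝ → ℝ) (hT : ContDiff ℝ (⊤ : ℕ∞) T) (hT' : ∀ t ∈ I, deriv T t = ε * g t)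
    (u : ℝ → ℝ → ℝ) (hu : ContDiff ℝ (⊤ : ℕ∞) (Function.uncurry u))
    (hupos : ∀ t ∈ I, ∀ x : ℝ, 0 < u t x)
    (hupde : ∀ t ∈ I, ∀ x : ℝ,
      pdT u t x + g t * pdX (fun t x => u t x ^ m) t x
        + f t * pdX3 (fun t x => u t x ^ n) t x = 0)
    (v : ℝ → ℝ → ℝ) (hv : ContDiff ℝ (⊤ : ℕ∞) (Function.uncurry v))
    (hvu : ∀ t ∈ I, ∀ x : ℝ, v (T t) x = u t x) :
    ∀ t ∈ I, ∀ x : ℝ,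
      pdT v (T t) x + ε * pdX (fun τ y => v τ y ^ m) (T t) x
        + (ε * f t / g t) * pdX3 (fun τ y => v τ y ^ n) (T t) x = 0 :=
  reduction_general_class_to_epsilon_class_general m n ε hε I hIopen f g hg0 T hT hT' u hupde v hv
    hvu
end

section
/- (Theorem 1: the usual equivalence group G∼.) Let m, n ∈ ℝ with n ≠ 0, ε = ±1, e ∈ {1, -1}, and let δ₀, δ₁, δ₂, δ₃ be real constants with δ₁ ≠ 0 and δ₃ > 0. Let f : ℝ → ℝ be nonvanishing, and suppose u : ℝ → ℝ → ℝ is smooth, positive, and satisfies ∂_t u + ε ∂_x(u^m) + f(t) ∂_x^3(u^n) = 0 on ℝ × ℝ. Define v : ℝ → ℝ → ℝ by v(τ, y) = δ₃ · u(e·δ₁^{-1}·δ₃^{m-1}·(τ - δ₀), (y - δ₂)/δ₁), and define f̃ : ℝ → ℝ by f̃(e·δ₁·δ₃^{1-m}·t + δ₀) = e·δ₁²·δ₃^{m-n}·f(t). Then v is smooth, positive, and satisfies ∂_τ v + (e·ε) ∂_y(v^m) + f̃(τ) ∂_y^3(v^n) = 0 on ℝ × ℝ; that is, the point transformation t̃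 = e·δ₁·δ₃^{1-m}·t + δ₀, x̃ = δ₁x + δ₂, ũ = δ₃u maps any equation of the class to the equation with arbitrary elements f̃ = e·δ₁²·δ₃^{m-n}·f, ε̃ = e·ε, ñ = n, m̃ = m. -/
open Real

/-!
The transformation is made of shifts and dilations of `t`, `x` and `u`. Shifts commute with
differentiation, and precomposing with `x ↦ b x` multiplies `∂ₓᵏ` by `bᵏ`, so the three terms of
the equation for `v` are those of the equation for `u` multiplied by `δ₃ a`, `e ε δ₃ᵐ / δ₁` and
`f̃ δ₃ⁿ / δ₁³`, where `a = e δ₃ᵐ⁻¹ / δ₁` is the time dilation. Since `e² = 1`, the rule for `f̃`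
makes all three factors equal to `e δ₃ᵐ / δ₁`.
-/

theorem deriv_const_mul_comp_mul_sub (g : ℝ → ℝ) (A b x₀ : ℝ) :
    deriv (fun x => A * g (b * (x - x₀))) = fun x => A * b * deriv g (b * (x - x₀)) := by
  funext x
  rw [deriv_const_mul_field, deriv_comp_sub_const (f := fun y => g (b * y)),
    deriv_comp_mul_left, smul_eq_mul, mul_assoc]

theorem iterate_deriv_const_mul_comp_mul_sub (g : ℝ → ℝ) (A b x₀ : ℝ) (k : ℕ) :
    deriv^[k] (fun x => A * g (b * (x - x₀)))
      = fun x => A * b ^ k * deriv^[k] g (b * (x - x₀)) := by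
  induction k with
  | zero => simp
  | succ k ih =>
    rw [Function.iterate_succ_apply', ih, deriv_const_mul_comp_mul_sub,
      ← Function.iterate_succ_apply' deriv, pow_succ, mul_assoc A]

section AffineChange

variable (u : ℝ → ℝ → ℝ) (A a b t₀ x₀ t x : ℝ)

theorem pdT_const_mul_comp_affine :
    pdT (fun t x => A * u (a * (t - t₀)) (b * (x - x₀))) t x
      = A * a * pdT u (a * (t - t₀)) (b * (x - x₀)) :=
  congrFun (deriv_const_mul_comp_mul_sub (fun s => u s (b * (x - x₀))) A a t₀) t

theorem pdX_const_mul_comp_affine :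
    pdX (fun t x => A * u (a * (t - t₀)) (b * (x - x₀))) t x
      = A * b * pdX u (a * (t - t₀)) (b * (x - x₀)) :=
  congrFun (deriv_const_mul_comp_mul_sub (fun y => u (a * (t - t₀)) y) A b x₀) x

theorem pdX3_const_mul_comp_affine :
    pdX3 (fun t x => A * u (a * (t - t₀)) (b * (x - x₀))) t x
      = A * b ^ 3 * pdX3 u (a * (t - t₀)) (b * (x - x₀)) :=
  congrFun (iterate_deriv_const_mul_comp_mul_sub (fun y => u (a * (t - t₀)) y) A b x₀ 3) x

theorem contDiff_uncurry_const_mul_comp_affine {k : WithTop ℕ∞}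
    (hu : ContDiff ℝ k (Function.uncurry u)) :
    ContDiff ℝ k (Function.uncurry fun t x => A * u (a * (t - t₀)) (b * (x - x₀))) :=
  contDiff_const.mul <| hu.comp <|
    (contDiff_const.mul (contDiff_fst.sub contDiff_const)).prodMk
      (contDiff_const.mul (contDiff_snd.sub contDiff_const))

end AffineChange

theorem time_rescaling_inverse {e δ₁ δ₃ : ℝ} (he : e = 1 ∨ e = -1) (hδ₁ : δ₁ ≠ 0)
    (hδ₃ : 0 < δ₃) (m τ δ₀ : ℝ) :
    e * δ₁ * δ₃ ^ (1 - m) * (e * δ₁⁻¹ * δ₃ ^ (m - 1) * (τ - δ₀)) + δ₀ = τ := by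
  have he2 : e * e = 1 := by rcases he with rfl | rfl <;> norm_num
  rw [rpow_sub hδ₃, rpow_sub_one hδ₃.ne', rpow_one]
  field_simp
  linear_combination (τ - δ₀) * he2

theorem usual_equivalence_group_general
    (m n : ℝ) (ε e : ℝ) (he : e = 1 ∨ e = -1)
    (δ0 δ1 δ2 δ3 : ℝ) (hδ1 : δ1 ≠ 0) (hδ3 : 0 < δ3)
    (f ftil : ℝ → ℝ)
    (u : ℝ → ℝ → ℝ) (hu : ContDiff ℝ (⊤ : ℕ∞) (Function.uncurry u))
    (hupos : ∀ t x : ℝ, 0 < u t x)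
    (hupde : ∀ t x : ℝ,
      pdT u t x + ε * pdX (fun t x => u t x ^ m) t x
        + f t * pdX3 (fun t x => u t x ^ n) t x = 0)
    (v : ℝ → ℝ → ℝ)
    (hv : ∀ τ y : ℝ, v τ y = δ3 * u (e * δ1⁻¹ * δ3 ^ (m - 1) * (τ - δ0)) ((y - δ2) / δ1))
    (hftil : ∀ t : ℝ, ftil (e * δ1 * δ3 ^ (1 - m) * t + δ0) = e * δ1 ^ 2 * δ3 ^ (m - n) * f t) :
    ContDiff ℝ (⊤ : ℕ∞) (Function.uncurry v) ∧ (∀ τ y : ℝ, 0 < v τ y) ∧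
      ∀ τ y : ℝ,
        pdT v τ y + (e * ε) * pdX (fun τ y => v τ y ^ m) τ y
          + ftil τ * pdX3 (fun τ y => v τ y ^ n) τ y = 0 := by
  set a := e * δ1⁻¹ * δ3 ^ (m - 1) with ha
  have hv' : v = fun τ y => δ3 * u (a * (τ - δ0)) (δ1⁻¹ * (y - δ2)) := by
    funext τ y; rw [hv, div_eq_inv_mul]
  have hvpow (p : ℝ) : (fun τ y => v τ y ^ p)
      = fun τ y => δ3 ^ p * u (a * (τ - δ0)) (δ1⁻¹ * (y - δ2)) ^ p := by
    funext τ y; rw [hv', mul_rpow hδ3.le (hupos _ _).le]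
  refine ⟨hv' ▸ contDiff_uncurry_const_mul_comp_affine u δ3 a δ1⁻¹ δ0 δ2 hu,
    fun τ y => hv' ▸ mul_pos hδ3 (hupos _ _), fun τ y => ?_⟩
  have hftil_τ : ftil τ = e * δ1 ^ 2 * δ3 ^ (m - n) * f (a * (τ - δ0)) := by
    rw [← hftil, time_rescaling_inverse he hδ1 hδ3]
  have hδ3a : δ3 * a = e * δ3 ^ m / δ1 := by
    rw [ha, rpow_sub_one hδ3.ne']
    field_simp
  rw [hvpow, hvpow, hv', pdT_const_mul_comp_affine,
    pdX_const_mul_comp_affine (fun t x => u t x ^ m),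
    pdX3_const_mul_comp_affine (fun t x => u t x ^ n), hftil_τ, hδ3a, rpow_sub hδ3]
  generalize a * (τ - δ0) = t, δ1⁻¹ * (y - δ2) = x
  field_simp
  linear_combination (e * δ3 ^ m) * hupde t x

/-- Theorem 1: the usual equivalence group `G∼` of the class
`u_t + ε(u^m)_x + f(t)(u^n)_xxx = 0`. -/
theorem usual_equivalence_group
    (m n : ℝ) (hn : n ≠ 0) (ε e : ℝ) (hε : ε = 1 ∨ ε = -1) (he : e = 1 ∨ e = -1)
    (δ0 δ1 δ2 δ3 : ℝ) (hδ1 : δ1 ≠ 0) (hδ3 : 0 < δ3)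
    (f ftil : ℝ → ℝ) (hf : ∀ t : ℝ, f t ≠ 0)
    (u : ℝ → ℝ → ℝ) (hu : ContDiff ℝ (⊤ : ℕ∞) (Function.uncurry u))
    (hupos : ∀ t x : ℝ, 0 < u t x)
    (hupde : ∀ t x : ℝ,
      pdT u t x + ε * pdX (fun t x => u t x ^ m) t x
        + f t * pdX3 (fun t x => u t x ^ n) t x = 0)
    (v : ℝ → ℝ → ℝ)
    (hv : ∀ τ y : ℝ, v τ y = δ3 * u (e * δ1⁻¹ * δ3 ^ (m - 1) * (τ - δ0)) ((y - δ2) / δ1))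
    (hftil : ∀ t : ℝ, ftil (e * δ1 * δ3 ^ (1 - m) * t + δ0) = e * δ1 ^ 2 * δ3 ^ (m - n) * f t) :
    ContDiff ℝ (⊤ : ℕ∞) (Function.uncurry v) ∧ (∀ τ y : ℝ, 0 < v τ y) ∧
      ∀ τ y : ℝ,
        pdT v τ y + (e * ε) * pdX (fun τ y => v τ y ^ m) τ y
          + ftil τ * pdX3 (fun τ y => v τ y ^ n) τ y = 0 :=
  usual_equivalence_group_general m n ε e he δ0 δ1 δ2 δ3 hδ1 hδ3 f ftil u hu hupos hupde v hv hftil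
end

section
/- (Theorem 2: conditional equivalence group for m = 0.) Let n ∈ ℝ with n ≠ 0, let δ₁, δ₂, δ₃ be real constants with δ₁ ≠ 0, δ₃ > 0, let I ⊆ ℝ be an open interval, let T : ℝ → ℝ be smooth with T'(t) ≠ 0 on I, and let f : ℝ → ℝ be nonvanishing on I. Suppose u : ℝ → ℝ → ℝ is smooth, positive on I × ℝ, and satisfies ∂_t u + f(t) ∂_x^3(u^n) = 0 on I × ℝ, and suppose v : ℝ → ℝ → ℝ is smooth with v(T(t), δ₁x + δ₂) = δ₃·u(t, x) for all t ∈ I, x ∈ ℝ. Then for every t ∈ I and x ∈ ℝ, at the point (T(t), δ₁x + δ₂) one has ∂_τ v + f̃(τ) ∂_y^3(v^n) = 0, where f̃(T(t)) = δ₁³·δ₃^{1-n}·f(t)/T'(t). Thus t̃ = T(t), x̃ = δ₁x + δ₂, ũ = δ₃u, f̃ = δ₁³δ₃^{1-n} f / T_t is an equivalence transformation of the subclass u_t + f(t)(u^n)_xxx = 0, for every smooth strictly monotone T. -/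
/-!
Write `u (t, x) = δ3⁻¹ v (T t, δ1 x + δ2)`. The chain rule gives `δ3 u_t = T' v_τ`, and, since
`u ^ n = δ3 ^ (-n) v ^ n` by positivity, `δ3 ^ n (u ^ n)_xxx = δ1 ^ 3 (v ^ n)_yyy`. Multiplying the
equation for `v` by `δ3 ^ n T'` therefore turns it into `δ3 ^ (n + 1)` times the equation for `u`.
-/

open Real

open Filter Topology

theorem iteratedDeriv_comp_mul_add {𝕜 E : Type*} [NontriviallyNormedField 𝕜]
    [NormedAddCommGroup E] [NormedSpace 𝕜 E] {n : ℕ} {f : 𝕜 → E} (hf : ContDiff 𝕜 n f)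
    (a b : 𝕜) :
    iteratedDeriv n (fun z => f (a * z + b)) = fun z => a ^ n • iteratedDeriv n f (a * z + b) := by
  have hfb : ContDiff 𝕜 n (fun w => f (w + b)) := hf.comp (contDiff_id.add contDiff_const)
  rw [iteratedDeriv_comp_const_smul hfb a, iteratedDeriv_comp_add_const]

theorem pdX3_eq_iteratedDeriv (u : ℝ → ℝ → ℝ) (t x : ℝ) :
    pdX3 u t x = iteratedDeriv 3 (u t) x := by
  rw [iteratedDeriv_eq_iterate]
  rfl

theorem pdX3_eq_of_eq_mul_comp_affine {u w : ℝ → ℝ → ℝ} {t τ c a b : ℝ}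
    (hw : ContDiff ℝ 3 (w τ)) (h : ∀ z, u t z = c * w τ (a * z + b)) (x : ℝ) :
    pdX3 u t x = c * a ^ 3 * pdX3 w τ (a * x + b) := by
  have hu : u t = fun z => c * w τ (a * z + b) := funext h
  rw [pdX3_eq_iteratedDeriv, pdX3_eq_iteratedDeriv, hu, iteratedDeriv_const_mul_field,
    iteratedDeriv_comp_mul_add hw]
  simp only [smul_eq_mul, mul_assoc]

theorem pdT_mul_deriv_of_eventuallyEq {u v : ℝ → ℝ → ℝ} {T : ℝ → ℝ} {t x y c : ℝ}
    (hv : DifferentiableAt ℝ (fun τ => v τ y) (T t)) (hT : DifferentiableAt ℝ T t)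
    (h : (fun s => v (T s) y) =ᶠ[𝓝 t] fun s => c * u s x) :
    pdT v (T t) y * deriv T t = c * pdT u t x := by
  have hchain : HasDerivAt (fun s => v (T s) y) (pdT v (T t) y * deriv T t) t :=
    hv.hasDerivAt.comp t hT.hasDerivAt
  rw [← hchain.deriv, h.deriv_eq, deriv_const_mul_field]
  rfl

theorem conditional_equivalence_group_m_eq_zero_general
    (n : ℝ) (δ1 δ2 δ3 : ℝ) (hδ1 : δ1 ≠ 0) (hδ3 : 0 < δ3)
    (I : Set ℝ) (hIopen : IsOpen I)
    (T : ℝ → ℝ) (hT' : ∀ t ∈ I, deriv T t ≠ 0)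
    (f ftil : ℝ → ℝ)
    (u : ℝ → ℝ → ℝ)
    (hupos : ∀ t ∈ I, ∀ x : ℝ, 0 < u t x)
    (hupde : ∀ t ∈ I, ∀ x : ℝ,
      pdT u t x + f t * pdX3 (fun t x => u t x ^ n) t x = 0)
    (v : ℝ → ℝ → ℝ) (hv : ContDiff ℝ (⊤ : ℕ∞) (Function.uncurry v))
    (hvu : ∀ t ∈ I, ∀ x : ℝ, v (T t) (δ1 * x + δ2) = δ3 * u t x)
    (hftil : ∀ t ∈ I, ftil (T t) = δ1 ^ 3 * δ3 ^ (1 - n) * f t / deriv T t) :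
    ∀ t ∈ I, ∀ x : ℝ,
      pdT v (T t) (δ1 * x + δ2)
        + ftil (T t) * pdX3 (fun τ y => v τ y ^ n) (T t) (δ1 * x + δ2) = 0 := by
  intro t ht x
  have hvne : ∀ y, v (T t) y ≠ 0 := fun y => by
    have h := hvu t ht ((y - δ2) / δ1)
    rw [show δ1 * ((y - δ2) / δ1) + δ2 = y by field_simp; ring] at h
    rw [h]
    exact (mul_pos hδ3 (hupos t ht _)).ne'
  have hvn : ContDiff ℝ 3 (fun y => v (T t) y ^ n) :=
    ((hv.comp (contDiff_const.prodMk contDiff_id)).of_le (by norm_cast)).rpow_const_of_ne hvne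
  have hspace : pdX3 (fun t x => u t x ^ n) t x
      = (δ3 ^ n)⁻¹ * δ1 ^ 3 * pdX3 (fun τ y => v τ y ^ n) (T t) (δ1 * x + δ2) :=
    pdX3_eq_of_eq_mul_comp_affine hvn (fun z => by
      rw [hvu t ht, mul_rpow hδ3.le (hupos t ht z).le]
      field_simp) x
  have htime : pdT v (T t) (δ1 * x + δ2) * deriv T t = δ3 * pdT u t x :=
    pdT_mul_deriv_of_eventuallyEq
      ((hv.comp (contDiff_id.prodMk contDiff_const)).differentiable (by simp) _)
      (differentiableAt_of_deriv_ne_zero (hT' t ht))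
      (eventually_of_mem (hIopen.mem_nhds ht) fun s hs => hvu s hs x)
  have hδ3n : δ3 ^ n ≠ 0 := (rpow_pos_of_pos hδ3 n).ne'
  have hTne := hT' t ht
  rw [hftil t ht, rpow_sub hδ3, rpow_one]
  field_simp at hspace ⊢
  linear_combination δ3 ^ n * htime + δ3 ^ n * δ3 * hupde t ht x - δ3 * f t * hspace

/-- Theorem 2: the conditional equivalence group `G∼_(n,0)` of the subclass
`u_t + f(t)(u^n)_xxx = 0` (the case `m = 0`). -/
theorem conditional_equivalence_group_m_eq_zero
    (n : ℝ) (hn : n ≠ 0) (δ1 δ2 δ3 : ℝ) (hδ1 : δ1 ≠ 0) (hδ3 : 0 < δ3)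
    (I : Set ℝ) (hIopen : IsOpen I) (hIconn : I.OrdConnected)
    (T : ℝ → ℝ) (hT : ContDiff ℝ (⊤ : ℕ∞) T) (hT' : ∀ t ∈ I, deriv T t ≠ 0)
    (f ftil : ℝ → ℝ) (hf : ∀ t ∈ I, f t ≠ 0)
    (u : ℝ → ℝ → ℝ) (hu : ContDiff ℝ (⊤ : ℕ∞) (Function.uncurry u))
    (hupos : ∀ t ∈ I, ∀ x : ℝ, 0 < u t x)
    (hupde : ∀ t ∈ I, ∀ x : ℝ,
      pdT u t x + f t * pdX3 (fun t x => u t x ^ n) t x = 0)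
    (v : ℝ → ℝ → ℝ) (hv : ContDiff ℝ (⊤ : ℕ∞) (Function.uncurry v))
    (hvu : ∀ t ∈ I, ∀ x : ℝ, v (T t) (δ1 * x + δ2) = δ3 * u t x)
    (hftil : ∀ t ∈ I, ftil (T t) = δ1 ^ 3 * δ3 ^ (1 - n) * f t / deriv T t) :
    ∀ t ∈ I, ∀ x : ℝ,
      pdT v (T t) (δ1 * x + δ2)
        + ftil (T t) * pdX3 (fun τ y => v τ y ^ n) (T t) (δ1 * x + δ2) = 0 :=
  conditional_equivalence_group_m_eq_zero_general n δ1 δ2 δ3 hδ1 hδ3 I hIopen T hT' f ftil u hupos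
    hupde v hv hvu hftil
end

section
/- (Theorem 4: conditional equivalence group for n = 1, m = 2.) Let ε = ±1, e ∈ {1, -1}, and let α, β, γ, δ, κ, μ₁, μ₀ be real constants with κ·(αδ - βγ) ≠ 0. Let I ⊆ ℝ be an open interval on which γt + δ ≠ 0, and let f : ℝ → ℝ be nonvanishing on I. Suppose u : ℝ → ℝ → ℝ is smooth and satisfies ∂_t u + ε ∂_x(u²) + f(t) ∂_x^3 u = 0 on I × ℝ, and suppose v : ℝ → ℝ → ℝ is smooth with v((αt + β)/(γt + δ), (κx + μ₁t + μ₀)/(γt + δ)) = e·(2εκ(γt + δ)·u(t,x) - κγx + μ₁δ - μ₀γ)/(2ε(αδ - βγ)) for all t ∈ I, x ∈ ℝ. Then for every t ∈ I and x ∈ ℝ, at the point (τ, y) = ((αt + β)/(γt + δ), (κx + μ₁t + μ₀)/(γt + δ)) one has ∂_τ v + (e·ε) ∂_y(v²) + f̃(τ) ∂_y^3 v = 0, where f̃((αt + β)/(γt + δ)) = κ³·f(t)/((αδ - βγ)(γt + δ)). -/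
open Real

/-! On each time slice the transformation is affine in `x`, so `y ↦ v(τ, y)` is an affine
function of `u(t, ·)` precomposed with an affine map, and its `y`-derivatives are rescaled
`x`-derivatives of `u`. Differentiating the defining identity in `t` along the curve
`t ↦ (τ(t), y(t, x))` gives `τ' v_τ + y_t v_y` in terms of `u` and `u_t`; eliminating `u_t`
by the equation for `u` and dividing by `τ' = (αδ - βγ)/(γt + δ)² ≠ 0` leaves the transformed
equation, the remaining cancellations using only `e² = 1`. -/

lemma hasDerivAt_div_affine (a b c d t : ℝ) (h : c * t + d ≠ 0) :
    HasDerivAt (fun z => (a * z + b) / (c * z + d)) ((a * d - b * c) / (c * t + d) ^ 2) t := by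
  have hnum : HasDerivAt (fun z => a * z + b) a t := by
    simpa using ((hasDerivAt_id t).const_mul a).add_const b
  have hden : HasDerivAt (fun z => c * z + d) c t := by
    simpa using ((hasDerivAt_id t).const_mul c).add_const d
  rw [show a * d - b * c = a * (c * t + d) - (a * t + b) * c by ring]
  exact hnum.div hden h

lemma deriv_affine_comp {F : ℝ → ℝ} (hF : Differentiable ℝ F) (A s r B C : ℝ) :
    deriv (fun z => A * F (s * z + r) + B * z + C)
      = fun z => A * s * deriv F (s * z + r) + B := by
  funext y
  have hin : HasDerivAt (fun z => s * z + r) s y := by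
    simpa using ((hasDerivAt_id y).const_mul s).add_const r
  have h := ((((hF _).hasDerivAt.comp y hin).const_mul A).add
    ((hasDerivAt_id y).const_mul B)).add_const C
  exact (h.congr_deriv (by ring)).deriv

lemma deriv_deriv_deriv_affine_comp {F : ℝ → ℝ} (hF : ContDiff ℝ 3 F) (A s r B C : ℝ) :
    deriv (deriv (deriv (fun z => A * F (s * z + r) + B * z + C)))
      = fun z => A * s ^ 3 * deriv (deriv (deriv F)) (s * z + r) := by
  have h1 : Differentiable ℝ F := hF.differentiable (by norm_num)
  have h2 : Differentiable ℝ (deriv F) := (hF.iterate_deriv' 2 1).differentiable (by norm_num)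
  have h3 : Differentiable ℝ (deriv (deriv F)) :=
    (hF.iterate_deriv' 1 2).differentiable (by norm_num)
  calc deriv (deriv (deriv (fun z => A * F (s * z + r) + B * z + C)))
      = deriv (deriv (fun z => A * s * deriv F (s * z + r) + 0 * z + B)) := by
        rw [deriv_affine_comp h1]; congr 2; funext z; ring
    _ = deriv (fun z => A * s * s * deriv (deriv F) (s * z + r) + 0 * z + 0) := by
        rw [deriv_affine_comp h2]; congr 1; funext z; ring
    _ = fun z => A * s ^ 3 * deriv (deriv (deriv F)) (s * z + r) := by
        rw [deriv_affine_comp h3]; funext z; ring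

section Slices

variable {v : ℝ → ℝ → ℝ} {F : ℝ → ℝ} {τ A s r B C : ℝ}

lemma pdX_eq_of_slice_eq_s4 (hF : Differentiable ℝ F)
    (h : ∀ y, v τ y = A * F (s * y + r) + B * y + C) (y : ℝ) :
    pdX v τ y = A * s * deriv F (s * y + r) + B := by
  simp only [pdX, h, deriv_affine_comp hF]

lemma pdX3_eq_of_slice_eq_s4 (hF : ContDiff ℝ 3 F)
    (h : ∀ y, v τ y = A * F (s * y + r) + B * y + C) (y : ℝ) :
    pdX3 v τ y = A * s ^ 3 * deriv (deriv (deriv F)) (s * y + r) := by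
  simp only [pdX3, h, deriv_deriv_deriv_affine_comp hF]

end Slices

lemma pdX_sq {w : ℝ → ℝ → ℝ} {t x : ℝ} (hw : DifferentiableAt ℝ (fun y => w t y) x) :
    pdX (fun t x => w t x ^ 2) t x = 2 * w t x * pdX w t x := by
  simp only [pdX, deriv_fun_pow hw]
  ring

lemma hasDerivAt_comp_of_differentiableAt_uncurry {v : ℝ → ℝ → ℝ} {T X : ℝ → ℝ}
    {T' X' t : ℝ}
    (hv : DifferentiableAt ℝ (Function.uncurry v) (T t, X t))
    (hT : HasDerivAt T T' t) (hX : HasDerivAt X X' t) :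
    HasDerivAt (fun z => v (T z) (X z))
      (T' * pdT v (T t) (X t) + X' * pdX v (T t) (X t)) t := by
  have hL := hv.hasFDerivAt
  have hpdT : pdT v (T t) (X t) = fderiv ℝ (Function.uncurry v) (T t, X t) (1, 0) := by
    have h := hL.comp_hasDerivAt (T t) ((hasDerivAt_id (T t)).prodMk (hasDerivAt_const (T t) (X t)))
    exact h.deriv
  have hpdX : pdX v (T t) (X t) = fderiv ℝ (Function.uncurry v) (T t, X t) (0, 1) := by
    have h := hL.comp_hasDerivAt (X t) ((hasDerivAt_const (X t) (T t)).prodMk (hasDerivAt_id (X t)))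
    exact h.deriv
  refine (hL.comp_hasDerivAt t (hT.prodMk hX)).congr_deriv ?_
  rw [hpdT, hpdX, ← smul_eq_mul, ← smul_eq_mul, ← map_smul, ← map_smul, ← map_add]
  simp

section Transform

variable {u v : ℝ → ℝ → ℝ} {ε e γ δ κ μ1 μ0 t τ D Δ : ℝ}

lemma slice_eq_of_transform (hε : ε ≠ 0) (hκ : κ ≠ 0) (hD : D ≠ 0)
    (hvu : ∀ x, v τ ((κ * x + μ1 * t + μ0) / D)
      = e * (2 * ε * κ * D * u t x - κ * γ * x + μ1 * δ - μ0 * γ) / (2 * ε * Δ))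
    (y : ℝ) :
    v τ y = e * κ * D / Δ * u t (D / κ * y + -(μ1 * t + μ0) / κ)
      + -(e * γ * D) / (2 * ε * Δ) * y
      + e * (γ * (μ1 * t + μ0) + μ1 * δ - μ0 * γ) / (2 * ε * Δ) := by
  have hx : (κ * (D / κ * y + -(μ1 * t + μ0) / κ) + μ1 * t + μ0) / D = y := by
    field_simp
    ring
  rw [← hx, hvu, hx]
  field_simp
  ring

lemma affine_inverse_apply (hκ : κ ≠ 0) (hD : D ≠ 0) (x : ℝ) :
    D / κ * ((κ * x + μ1 * t + μ0) / D) + -(μ1 * t + μ0) / κ = x := by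
  field_simp
  ring

lemma pdX_of_transform (hε : ε ≠ 0) (hκ : κ ≠ 0) (hD : D ≠ 0)
    (hu : Differentiable ℝ (fun y => u t y))
    (hvu : ∀ x, v τ ((κ * x + μ1 * t + μ0) / D)
      = e * (2 * ε * κ * D * u t x - κ * γ * x + μ1 * δ - μ0 * γ) / (2 * ε * Δ))
    (x : ℝ) :
    pdX v τ ((κ * x + μ1 * t + μ0) / D)
      = e * κ * D / Δ * (D / κ) * pdX u t x + -(e * γ * D) / (2 * ε * Δ) := by
  rw [pdX_eq_of_slice_eq_s4 hu (slice_eq_of_transform hε hκ hD hvu), affine_inverse_apply hκ hD]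
  rfl

lemma pdX3_of_transform (hε : ε ≠ 0) (hκ : κ ≠ 0) (hD : D ≠ 0)
    (hu : ContDiff ℝ 3 (fun y => u t y))
    (hvu : ∀ x, v τ ((κ * x + μ1 * t + μ0) / D)
      = e * (2 * ε * κ * D * u t x - κ * γ * x + μ1 * δ - μ0 * γ) / (2 * ε * Δ))
    (x : ℝ) :
    pdX3 v τ ((κ * x + μ1 * t + μ0) / D) = e * κ * D / Δ * (D / κ) ^ 3 * pdX3 u t x := by
  rw [pdX3_eq_of_slice_eq_s4 hu (slice_eq_of_transform hε hκ hD hvu), affine_inverse_apply hκ hD]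
  rfl

end Transform

lemma hasDerivAt_transform_rhs {w : ℝ → ℝ} {w' t : ℝ} (hw : HasDerivAt w w' t)
    (e ε κ γ δ a b c d : ℝ) :
    HasDerivAt (fun z => e * (2 * ε * κ * (γ * z + δ) * w z - a + b - c) / d)
      (e * (2 * ε * κ * (γ * w t + (γ * t + δ) * w')) / d) t := by
  have hlin : HasDerivAt (fun z => γ * z + δ) γ t := by
    simpa using ((hasDerivAt_id t).const_mul γ).add_const δ
  have h := (((((hlin.const_mul (2 * ε * κ)).mul hw).sub_const a).add_const b).sub_const c
    |>.const_mul e).div_const d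
  exact h.congr_deriv (by ring)

lemma transformed_equation_of_chain_rule
    {ε e κ γ δ μ1 μ0 x D Δ u0 u1 u3 ut ft vt v0 vy vyyy : ℝ}
    (hε : ε ≠ 0) (he : e = 1 ∨ e = -1) (hκ : κ ≠ 0) (hD : D ≠ 0) (hΔ : Δ ≠ 0)
    (hpde : ut + ε * (2 * u0 * u1) + ft * u3 = 0)
    (hv0 : v0 = e * (2 * ε * κ * D * u0 - κ * γ * x + μ1 * δ - μ0 * γ) / (2 * ε * Δ))
    (hvy : vy = e * κ * D / Δ * (D / κ) * u1 + -(e * γ * D) / (2 * ε * Δ))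
    (hvyyy : vyyy = e * κ * D / Δ * (D / κ) ^ 3 * u3)
    (hchain : Δ / D ^ 2 * vt + (μ1 * δ - (κ * x + μ0) * γ) / D ^ 2 * vy
      = e * (2 * ε * κ * (γ * u0 + D * ut)) / (2 * ε * Δ)) :
    vt + e * ε * (2 * v0 * vy) + κ ^ 3 * ft / (Δ * D) * vyyy = 0 := by
  refine (mul_eq_zero.mp ?_).resolve_left (div_ne_zero hΔ (pow_ne_zero 2 hD))
  rw [show Δ / D ^ 2 * (vt + e * ε * (2 * v0 * vy) + κ ^ 3 * ft / (Δ * D) * vyyy)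
      = (Δ / D ^ 2 * vt + (μ1 * δ - (κ * x + μ0) * γ) / D ^ 2 * vy)
        + (Δ / D ^ 2 * (e * ε * (2 * v0 * vy) + κ ^ 3 * ft / (Δ * D) * vyyy)
          - (μ1 * δ - (κ * x + μ0) * γ) / D ^ 2 * vy) by ring, hchain]
  obtain rfl : ut = -(ε * (2 * u0 * u1)) - ft * u3 := by linear_combination hpde
  subst hv0 hvy hvyyy
  rcases he with rfl | rfl <;> field_simp <;> ring

theorem conditional_equivalence_group_n1_m2_general
    (ε e : ℝ) (hε : ε = 1 ∨ ε = -1) (he : e = 1 ∨ e = -1)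
    (α β γ δ κ μ1 μ0 : ℝ) (hκ : κ * (α * δ - β * γ) ≠ 0)
    (I : Set ℝ) (hIopen : IsOpen I)
    (hden : ∀ t ∈ I, γ * t + δ ≠ 0)
    (f ftil : ℝ → ℝ)
    (u : ℝ → ℝ → ℝ) (hu : ContDiff ℝ (⊤ : ℕ∞) (Function.uncurry u))
    (hupde : ∀ t ∈ I, ∀ x : ℝ,
      pdT u t x + ε * pdX (fun t x => u t x ^ 2) t x + f t * pdX3 u t x = 0)
    (v : ℝ → ℝ → ℝ) (hv : ContDiff ℝ (⊤ : ℕ∞) (Function.uncurry v))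
    (hvu : ∀ t ∈ I, ∀ x : ℝ,
      v ((α * t + β) / (γ * t + δ)) ((κ * x + μ1 * t + μ0) / (γ * t + δ))
        = e * (2 * ε * κ * (γ * t + δ) * u t x - κ * γ * x + μ1 * δ - μ0 * γ)
            / (2 * ε * (α * δ - β * γ)))
    (hftil : ∀ t ∈ I,
      ftil ((α * t + β) / (γ * t + δ))
        = κ ^ 3 * f t / ((α * δ - β * γ) * (γ * t + δ))) :
    ∀ t ∈ I, ∀ x : ℝ,
      pdT v ((α * t + β) / (γ * t + δ)) ((κ * x + μ1 * t + μ0) / (γ * t + δ))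
        + (e * ε) * pdX (fun τ y => v τ y ^ 2) ((α * t + β) / (γ * t + δ))
            ((κ * x + μ1 * t + μ0) / (γ * t + δ))
        + ftil ((α * t + β) / (γ * t + δ)) * pdX3 v ((α * t + β) / (γ * t + δ))
            ((κ * x + μ1 * t + μ0) / (γ * t + δ)) = 0 := by
  intro t ht x
  obtain ⟨hκ0, hΔ⟩ := mul_ne_zero_iff.mp hκ
  have hε0 : ε ≠ 0 := by rcases hε with rfl | rfl <;> norm_num
  have hD := hden t ht
  have hU : ContDiff ℝ 3 (fun y => u t y) :=
    (hu.comp (contDiff_const.prodMk contDiff_id)).of_le (by norm_cast)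
  have hV : Differentiable ℝ (Function.uncurry v) := hv.differentiable (by norm_cast)
  have hX : HasDerivAt (fun z => (κ * x + μ1 * z + μ0) / (γ * z + δ))
      ((μ1 * δ - (κ * x + μ0) * γ) / (γ * t + δ) ^ 2) t :=
    (hasDerivAt_div_affine μ1 (κ * x + μ0) γ δ t hD).congr_of_eventuallyEq
      (.of_forall fun z => by ring)
  have hchain := hasDerivAt_comp_of_differentiableAt_uncurry (hV _)
    (hasDerivAt_div_affine α β γ δ t hD) hX
  have hux : HasDerivAt (fun z => u z x) (pdT u t x) t :=
    ((hu.differentiable (by norm_cast)).comp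
      (differentiable_id.prodMk (differentiable_const x)) t).hasDerivAt
  have hrhs := (hasDerivAt_transform_rhs hux e ε κ γ δ (κ * γ * x) (μ1 * δ) (μ0 * γ)
    (2 * ε * (α * δ - β * γ))).congr_of_eventuallyEq
      (Filter.eventually_of_mem (hIopen.mem_nhds ht) fun z hz => hvu z hz x)
  have hpde := hupde t ht x
  rw [pdX_sq ((hU.differentiable (by norm_num)) x)] at hpde
  rw [pdX_sq ((hV _).comp _ ((differentiableAt_const _).prodMk differentiableAt_id)),
    hftil t ht]
  exact transformed_equation_of_chain_rule hε0 he hκ0 hD hΔ hpde (hvu t ht x)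
    (pdX_of_transform hε0 hκ0 hD (hU.differentiable (by norm_num)) (hvu t ht) x)
    (pdX3_of_transform hε0 hκ0 hD hU (hvu t ht) x) (hchain.unique hrhs)

/-- Theorem 4: the conditional equivalence group `G∼_(1,2)` of the subclass
`u_t + ε(u²)_x + f(t) u_xxx = 0` (the case `n = 1`, `m = 2`). -/
theorem conditional_equivalence_group_n1_m2
    (ε e : ℝ) (hε : ε = 1 ∨ ε = -1) (he : e = 1 ∨ e = -1)
    (α β γ δ κ μ1 μ0 : ℝ) (hκ : κ * (α * δ - β * γ) ≠ 0)
    (I : Set ℝ) (hIopen : IsOpen I) (hIconn : I.OrdConnected)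
    (hden : ∀ t ∈ I, γ * t + δ ≠ 0)
    (f ftil : ℝ → ℝ) (hf : ∀ t ∈ I, f t ≠ 0)
    (u : ℝ → ℝ → ℝ) (hu : ContDiff ℝ (⊤ : ℕ∞) (Function.uncurry u))
    (hupde : ∀ t ∈ I, ∀ x : ℝ,
      pdT u t x + ε * pdX (fun t x => u t x ^ 2) t x + f t * pdX3 u t x = 0)
    (v : ℝ → ℝ → ℝ) (hv : ContDiff ℝ (⊤ : ℕ∞) (Function.uncurry v))
    (hvu : ∀ t ∈ I, ∀ x : ℝ,
      v ((α * t + β) / (γ * t + δ)) ((κ * x + μ1 * t + μ0) / (γ * t + δ))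
        = e * (2 * ε * κ * (γ * t + δ) * u t x - κ * γ * x + μ1 * δ - μ0 * γ)
            / (2 * ε * (α * δ - β * γ)))
    (hftil : ∀ t ∈ I,
      ftil ((α * t + β) / (γ * t + δ))
        = κ ^ 3 * f t / ((α * δ - β * γ) * (γ * t + δ))) :
    ∀ t ∈ I, ∀ x : ℝ,
      pdT v ((α * t + β) / (γ * t + δ)) ((κ * x + μ1 * t + μ0) / (γ * t + δ))
        + (e * ε) * pdX (fun τ y => v τ y ^ 2) ((α * t + β) / (γ * t + δ))
            ((κ * x + μ1 * t + μ0) / (γ * t + δ))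
        + ftil ((α * t + β) / (γ * t + δ)) * pdX3 v ((α * t + β) / (γ * t + δ))
            ((κ * x + μ1 * t + μ0) / (γ * t + δ)) = 0 :=
  conditional_equivalence_group_n1_m2_general ε e hε he α β γ δ κ μ1 μ0 hκ I hIopen hden f ftil u hu
    hupde v hv hvu hftil
end

section
/- (Table 1, Case 2: scaling symmetry when m = (n+2)/3.) Let n ∈ ℝ with n ≠ 0 and n ≠ 1, set m = (n + 2)/3, let ε = ±1, let f : ℝ → ℝ be nonvanishing, and let s ∈ ℝ. Suppose u : ℝ → ℝ → ℝ is smooth, positive, and satisfies ∂_t u + ε ∂_x(u^m) + f(t) ∂_x^3(u^n) = 0 on ℝ × ℝ. Then the function v defined by v(t, x) = e^{3s/(n-1)} · u(t, e^{-s} x) is also smooth, positive, and satisfies the same equation ∂_t v + ε ∂_x(v^m) + f(t) ∂_x^3(v^n) = 0 on ℝ × ℝ. (This is the one-parameter symmetry group generated by the vector field x ∂_x + (3/(n-1)) u ∂_u.) -/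
open Real

/-! The transformation `u ↦ c · u(t, a x)` multiplies `∂_t u` by `c`, `∂_x (u^p)` by `c^p a` and
`∂_x^3 (u^n)` by `c^n a^3`. With `c = e^{3s/(n-1)}`, `a = e^{-s}` and `m = (n+2)/3` the exponents
satisfy `c^m a = c^n a^3 = c`, so each term of the equation for `v` at `(t, x)` is `c` times the
corresponding term of the equation for `u` at `(t, e^{-s} x)`. No smoothness enters the computation
of the derivatives: the chain rule for `x ↦ a x` and pulling out constants hold for every function. -/

section IterateDeriv

variable {𝕜 : Type*} [NontriviallyNormedField 𝕜]

theorem iterate_deriv_const_mul (k : ℕ) (c : 𝕜) (f : 𝕜 → 𝕜) :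
    deriv^[k] (fun x => c * f x) = fun x => c * deriv^[k] f x := by
  simpa only [← iteratedDeriv_eq_iterate] using
    funext fun x => iteratedDeriv_const_mul_field (x := x) (n := k) c f

theorem iterate_deriv_comp_const_mul (k : ℕ) (a : 𝕜) (f : 𝕜 → 𝕜) :
    deriv^[k] (fun x => f (a * x)) = fun x => a ^ k * deriv^[k] f (a * x) := by
  induction k generalizing f with
  | zero => simp
  | succ k ih =>
    have hderiv : deriv (fun x => f (a * x)) = fun x => a * deriv f (a * x) :=
      funext fun x => deriv_comp_mul_left a f x
    rw [Function.iterate_succ_apply, hderiv, iterate_deriv_const_mul, ih]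
    funext x
    rw [Function.iterate_succ_apply, pow_succ]
    ring

end IterateDeriv

section Scaling

variable (c a : ℝ) (w : ℝ → ℝ → ℝ) (t x : ℝ)

theorem pdT_const_mul_comp_mul :
    pdT (fun t x => c * w t (a * x)) t x = c * pdT w t (a * x) :=
  deriv_const_mul_field c

theorem pdX_const_mul_comp_mul :
    pdX (fun t x => c * w t (a * x)) t x = c * a * pdX w t (a * x) := by
  rw [pdX, pdX, deriv_const_mul_field, deriv_comp_mul_left, smul_eq_mul, mul_assoc]

theorem pdX3_const_mul_comp_mul :
    pdX3 (fun t x => c * w t (a * x)) t x = c * a ^ 3 * pdX3 w t (a * x) := by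
  change deriv^[3] (fun y => c * w t (a * y)) x = c * a ^ 3 * deriv^[3] (w t) (a * x)
  rw [iterate_deriv_const_mul, iterate_deriv_comp_const_mul, mul_assoc]

end Scaling

theorem exp_rpow_mul_exp_neg_pow {K p s : ℝ} {k : ℕ} (h : K * (p - 1) = k * s) :
    exp K ^ p * exp (-s) ^ k = exp K := by
  rw [← exp_mul, ← exp_nat_mul, ← exp_add]
  congr 1
  linear_combination h

theorem rpow_const_mul_comp_mul {c : ℝ} (hc : 0 ≤ c) (a : ℝ) {u : ℝ → ℝ → ℝ}
    (hu : ∀ t x, 0 ≤ u t x) (p : ℝ) :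
    (fun t x => (c * u t (a * x)) ^ p) = fun t x => c ^ p * u t (a * x) ^ p :=
  funext₂ fun t _ => mul_rpow hc (hu t _)

section PowerScaling

variable {c : ℝ} (hc : 0 ≤ c) (a : ℝ) {u : ℝ → ℝ → ℝ} (hu : ∀ t x, 0 ≤ u t x) (p t x : ℝ)
include hc hu

theorem pdX_rpow_const_mul_comp_mul :
    pdX (fun t x => (c * u t (a * x)) ^ p) t x = c ^ p * a * pdX (fun t x => u t x ^ p) t (a * x) := by
  rw [rpow_const_mul_comp_mul hc a hu p]
  exact pdX_const_mul_comp_mul (c ^ p) a (fun t x => u t x ^ p) t x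

theorem pdX3_rpow_const_mul_comp_mul :
    pdX3 (fun t x => (c * u t (a * x)) ^ p) t x
      = c ^ p * a ^ 3 * pdX3 (fun t x => u t x ^ p) t (a * x) := by
  rw [rpow_const_mul_comp_mul hc a hu p]
  exact pdX3_const_mul_comp_mul (c ^ p) a (fun t x => u t x ^ p) t x

end PowerScaling

theorem scaling_symmetry_m_eq_n_plus_two_div_three_general
    (n : ℝ) (hn1 : n ≠ 1) (m : ℝ) (hm : m = (n + 2) / 3)
    (ε : ℝ)
    (f : ℝ → ℝ) (s : ℝ)
    (u : ℝ → ℝ → ℝ) (hu : ContDiff ℝ (⊤ : ℕ∞) (Function.uncurry u))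
    (hupos : ∀ t x : ℝ, 0 < u t x)
    (hupde : ∀ t x : ℝ,
      pdT u t x + ε * pdX (fun t x => u t x ^ m) t x
        + f t * pdX3 (fun t x => u t x ^ n) t x = 0)
    (v : ℝ → ℝ → ℝ)
    (hv : ∀ t x : ℝ, v t x = Real.exp (3 * s / (n - 1)) * u t (Real.exp (-s) * x)) :
    ContDiff ℝ (⊤ : ℕ∞) (Function.uncurry v) ∧ (∀ t x : ℝ, 0 < v t x) ∧
      ∀ t x : ℝ,
        pdT v t x + ε * pdX (fun t x => v t x ^ m) t x
          + f t * pdX3 (fun t x => v t x ^ n) t x = 0 := by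
  obtain rfl : v = fun t x => exp (3 * s / (n - 1)) * u t (exp (-s) * x) := funext₂ hv
  set K := 3 * s / (n - 1) with hK
  have hn1' : n - 1 ≠ 0 := sub_ne_zero.mpr hn1
  have hcm : exp K ^ m * exp (-s) = exp K := by
    simpa only [pow_one] using exp_rpow_mul_exp_neg_pow (k := 1) (by rw [hK, hm]; field_simp; ring)
  have hcn : exp K ^ n * exp (-s) ^ 3 = exp K :=
    exp_rpow_mul_exp_neg_pow (by rw [hK]; field_simp; ring)
  refine ⟨?_, fun t x => mul_pos (exp_pos _) (hupos t _), fun t x => ?_⟩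
  · exact contDiff_const.mul (hu.comp (contDiff_fst.prodMk (contDiff_const.mul contDiff_snd)))
  have hunonneg : ∀ t x, 0 ≤ u t x := fun t x => (hupos t x).le
  rw [pdT_const_mul_comp_mul, pdX_rpow_const_mul_comp_mul (exp_pos K).le _ hunonneg,
    pdX3_rpow_const_mul_comp_mul (exp_pos K).le _ hunonneg, hcm, hcn]
  linear_combination exp K * hupde t (exp (-s) * x)

/-- Table 1, Case 2: the scaling symmetry generated by `x∂_x + (3/(n-1))u∂_u`
when `m = (n+2)/3`. -/
theorem scaling_symmetry_m_eq_n_plus_two_div_three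
    (n : ℝ) (hn : n ≠ 0) (hn1 : n ≠ 1) (m : ℝ) (hm : m = (n + 2) / 3)
    (ε : ℝ) (hε : ε = 1 ∨ ε = -1)
    (f : ℝ → ℝ) (hf : ∀ t : ℝ, f t ≠ 0) (s : ℝ)
    (u : ℝ → ℝ → ℝ) (hu : ContDiff ℝ (⊤ : ℕ∞) (Function.uncurry u))
    (hupos : ∀ t x : ℝ, 0 < u t x)
    (hupde : ∀ t x : ℝ,
      pdT u t x + ε * pdX (fun t x => u t x ^ m) t x
        + f t * pdX3 (fun t x => u t x ^ n) t x = 0)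
    (v : ℝ → ℝ → ℝ)
    (hv : ∀ t x : ℝ, v t x = Real.exp (3 * s / (n - 1)) * u t (Real.exp (-s) * x)) :
    ContDiff ℝ (⊤ : ℕ∞) (Function.uncurry v) ∧ (∀ t x : ℝ, 0 < v t x) ∧
      ∀ t x : ℝ,
        pdT v t x + ε * pdX (fun t x => v t x ^ m) t x
          + f t * pdX3 (fun t x => v t x ^ n) t x = 0 :=
  scaling_symmetry_m_eq_n_plus_two_div_three_general n hn1 m hm ε f s u hu hupos hupde v hv
end

section
/- (Table 1, Case 5: scaling symmetry of the constant-coefficient K(m,n) equation.) Let m, n ∈ ℝ with n ≠ 0, let ε = ±1, and let s ∈ ℝ. Suppose u : ℝ → ℝ → ℝ is smooth, positive, and satisfies ∂_t u + ε ∂_x(u^m) + ∂_x^3(u^n) = 0 on ℝ × ℝ. Then the function v defined by v(t, x) = e^{-2s} · u(e^{-(3m-n-2)s} t, e^{-(m-n)s} x) is smooth, positive, and satisfies the same equation ∂_t v + ε ∂_x(v^m) + ∂_x^3(v^n) = 0 on ℝ × ℝ. (This is the one-parameter group generated by (3m-n-2) t ∂_t + (m-n) x ∂_x - 2u ∂_u.)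 -/
/-!
The map `u ↦ c · u(a t, b x)` multiplies `∂ₜu` by `c a`, `∂ₓ(uᵐ)` by `cᵐ b` and `∂ₓ³(uⁿ)` by
`cⁿ b³` (for `c ≥ 0`, `u ≥ 0`), so it preserves the K(m,n) equation as soon as these three
weights agree. For `c = e^{-2s}`, `a = e^{-(3m-n-2)s}`, `b = e^{-(m-n)s}` all three equal
`e^{(n-3m)s}`.
-/

open Real

noncomputable def kmnOperator (ε m n : ℝ) (u : ℝ → ℝ → ℝ) (t x : ℝ) : ℝ :=
  pdT u t x + ε * pdX (fun t x => u t x ^ m) t x + pdX3 (fun t x => u t x ^ n) t x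

def rescale (c a b : ℝ) (u : ℝ → ℝ → ℝ) (t x : ℝ) : ℝ := c * u (a * t) (b * x)

lemma deriv_const_mul_comp_mul_left (c b : ℝ) (F : ℝ → ℝ) :
    deriv (fun y => c * F (b * y)) = fun y => c * b * deriv F (b * y) := by
  funext y
  rw [deriv_const_mul_field, deriv_comp_mul_left, smul_eq_mul, mul_assoc]

section rescale

variable (c a b : ℝ) (u : ℝ → ℝ → ℝ) (t x : ℝ)

lemma pdT_rescale : pdT (rescale c a b u) t x = c * a * pdT u (a * t) (b * x) :=
  congrFun (deriv_const_mul_comp_mul_left c a (fun s => u s (b * x))) t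

lemma pdX_rescale : pdX (rescale c a b u) t x = c * b * pdX u (a * t) (b * x) :=
  congrFun (deriv_const_mul_comp_mul_left c b (u (a * t))) x

lemma pdX3_rescale : pdX3 (rescale c a b u) t x = c * b ^ 3 * pdX3 u (a * t) (b * x) := by
  simp only [pdX3, rescale, deriv_const_mul_comp_mul_left]
  ring

variable {c a b u t x}

lemma rescale_rpow (hc : 0 ≤ c) (hu : ∀ t x, 0 ≤ u t x) (p : ℝ) :
    (fun t x => rescale c a b u t x ^ p) = rescale (c ^ p) a b (fun t x => u t x ^ p) := by
  funext t x
  exact mul_rpow hc (hu _ _)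

lemma rescale_pos (hc : 0 < c) (hu : ∀ t x, 0 < u t x) : 0 < rescale c a b u t x :=
  mul_pos hc (hu _ _)

lemma contDiff_rescale {k : WithTop ℕ∞} (hu : ContDiff ℝ k (Function.uncurry u)) :
    ContDiff ℝ k (Function.uncurry (rescale c a b u)) :=
  contDiff_const.mul <| hu.comp <|
    (contDiff_const.mul contDiff_fst).prodMk (contDiff_const.mul contDiff_snd)

lemma kmnOperator_rescale (ε m n : ℝ) (hc : 0 ≤ c) (hu : ∀ t x, 0 ≤ u t x)
    (hm : c ^ m * b = c * a) (hn : c ^ n * b ^ 3 = c * a) :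
    kmnOperator ε m n (rescale c a b u) t x = c * a * kmnOperator ε m n u (a * t) (b * x) := by
  simp only [kmnOperator, rescale_rpow hc hu, pdT_rescale, pdX_rescale, pdX3_rescale, hm, hn]
  ring

end rescale

lemma kmn_scaling_weights (m n s : ℝ) :
    exp (-2 * s) ^ m * exp (-(m - n) * s) = exp (-2 * s) * exp (-(3 * m - n - 2) * s) ∧
      exp (-2 * s) ^ n * exp (-(m - n) * s) ^ 3 = exp (-2 * s) * exp (-(3 * m - n - 2) * s) := by
  simp only [← exp_mul, ← exp_nat_mul, ← exp_add]
  constructor <;> congr 1 <;> push_cast <;> ring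

theorem scaling_symmetry_constant_coefficient_general
    (m n : ℝ) (ε : ℝ) (s : ℝ)
    (u : ℝ → ℝ → ℝ) (hu : ContDiff ℝ (⊤ : ℕ∞) (Function.uncurry u))
    (hupos : ∀ t x : ℝ, 0 < u t x)
    (hupde : ∀ t x : ℝ,
      pdT u t x + ε * pdX (fun t x => u t x ^ m) t x
        + pdX3 (fun t x => u t x ^ n) t x = 0)
    (v : ℝ → ℝ → ℝ)
    (hv : ∀ t x : ℝ, v t x = Real.exp (-2 * s)
      * u (Real.exp (-(3 * m - n - 2) * s) * t) (Real.exp (-(m - n) * s) * x)) :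
    ContDiff ℝ (⊤ : ℕ∞) (Function.uncurry v) ∧ (∀ t x : ℝ, 0 < v t x) ∧
      ∀ t x : ℝ,
        pdT v t x + ε * pdX (fun t x => v t x ^ m) t x
          + pdX3 (fun t x => v t x ^ n) t x = 0 := by
  obtain rfl : v = rescale (exp (-2 * s)) (exp (-(3 * m - n - 2) * s)) (exp (-(m - n) * s)) u :=
    funext fun t => funext (hv t)
  obtain ⟨hm, hn⟩ := kmn_scaling_weights m n s
  refine ⟨contDiff_rescale hu, fun t x => rescale_pos (exp_pos _) hupos, fun t x => ?_⟩
  show kmnOperator ε m n _ t x = 0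
  rw [kmnOperator_rescale ε m n (exp_pos _).le (fun t x => (hupos t x).le) hm hn]
  exact mul_eq_zero_of_right _ (hupde _ _)

/-- Table 1, Case 5: the scaling symmetry generated by
`(3m-n-2)t∂_t + (m-n)x∂_x - 2u∂_u` of the constant-coefficient K(m,n) equation. -/
theorem scaling_symmetry_constant_coefficient
    (m n : ℝ) (hn : n ≠ 0) (ε : ℝ) (hε : ε = 1 ∨ ε = -1) (s : ℝ)
    (u : ℝ → ℝ → ℝ) (hu : ContDiff ℝ (⊤ : ℕ∞) (Function.uncurry u))
    (hupos : ∀ t x : ℝ, 0 < u t x)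
    (hupde : ∀ t x : ℝ,
      pdT u t x + ε * pdX (fun t x => u t x ^ m) t x
        + pdX3 (fun t x => u t x ^ n) t x = 0)
    (v : ℝ → ℝ → ℝ)
    (hv : ∀ t x : ℝ, v t x = Real.exp (-2 * s)
      * u (Real.exp (-(3 * m - n - 2) * s) * t) (Real.exp (-(m - n) * s) * x)) :
    ContDiff ℝ (⊤ : ℕ∞) (Function.uncurry v) ∧ (∀ t x : ℝ, 0 < v t x) ∧
      ∀ t x : ℝ,
        pdT v t x + ε * pdX (fun t x => v t x ^ m) t x
          + pdX3 (fun t x => v t x ^ n) t x = 0 :=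
  scaling_symmetry_constant_coefficient_general m n ε s u hu hupos hupde v hv
end

section
/- (Table 1, Case 4: conformal symmetry of u_t + (u^{-1/2})_xxx = 0.) Let s ∈ ℝ and let Ω = {(t, x) ∈ ℝ × ℝ : 1 + s·x > 0}. Suppose u : ℝ → ℝ → ℝ is smooth, positive, and satisfies ∂_t u + ∂_x^3(u^{-1/2}) = 0 on ℝ × ℝ. Then the function v defined on Ω by v(t, x) = (1 + s·x)^{-4} · u(t, x/(1 + s·x)) is smooth, positive on Ω, and satisfies ∂_t v + ∂_x^3(v^{-1/2}) = 0 on Ω. (This is the finite form of the additional symmetry generator x² ∂_x - 4xu ∂_u admitted in the case n = -1/2, m = 0, f = 1.) -/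
/-!
Write `a = 1 + s x`, `w = x / a` and `Φ = u(t, ·)^{-1/2}`. Then `v^{-1/2}(t, x) = a² Φ(w)`, and
since `dw/dx = a⁻²`, three differentiations of `a² Φ(w)` leave exactly `a⁻⁴ Φ'''(w)`: all terms
with lower derivatives of `Φ` cancel (Bol's lemma for the projective map `x ↦ x / (1 + s x)`).
The time derivative is `v_t = a⁻⁴ u_t(t, w)`, so the equation for `v` at `(t, x)` is
`a⁻⁴` times the equation for `u` at `(t, w)`.
-/

open Real Topology

namespace Conformal

variable {s x : ℝ} {Φ : ℝ → ℝ}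

lemma hasDerivAt_one_add_mul : HasDerivAt (fun y => 1 + s * y) s x := by
  simpa using ((hasDerivAt_id x).const_mul s).const_add 1

lemma hasDerivAt_div_one_add_mul (hx : 1 + s * x ≠ 0) :
    HasDerivAt (fun y => y / (1 + s * y)) ((1 + s * x) ^ 2)⁻¹ x := by
  refine ((hasDerivAt_id' x).div hasDerivAt_one_add_mul hx).congr_deriv ?_
  field_simp
  ring

lemma hasDerivAt_comp_div_one_add_mul (hΦ : DifferentiableAt ℝ Φ (x / (1 + s * x)))
    (hx : 1 + s * x ≠ 0) :
    HasDerivAt (fun y => Φ (y / (1 + s * y)))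
      (deriv Φ (x / (1 + s * x)) * ((1 + s * x) ^ 2)⁻¹) x :=
  hΦ.hasDerivAt.comp x (hasDerivAt_div_one_add_mul hx)

lemma hasDerivAt_sq_mul_comp (hΦ : DifferentiableAt ℝ Φ (x / (1 + s * x)))
    (hx : 1 + s * x ≠ 0) :
    HasDerivAt (fun y => (1 + s * y) ^ 2 * Φ (y / (1 + s * y)))
      (2 * s * (1 + s * x) * Φ (x / (1 + s * x)) + deriv Φ (x / (1 + s * x))) x := by
  refine ((hasDerivAt_one_add_mul.pow 2).mul
    (hasDerivAt_comp_div_one_add_mul hΦ hx)).congr_deriv ?_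
  simp only [Pi.pow_apply]
  field_simp
  ring

lemma hasDerivAt_sq_mul_comp_deriv (hΦ : DifferentiableAt ℝ Φ (x / (1 + s * x)))
    (hΦ' : DifferentiableAt ℝ (deriv Φ) (x / (1 + s * x))) (hx : 1 + s * x ≠ 0) :
    HasDerivAt (fun y => 2 * s * (1 + s * y) * Φ (y / (1 + s * y)) + deriv Φ (y / (1 + s * y)))
      (2 * s ^ 2 * Φ (x / (1 + s * x)) + 2 * s * (1 + s * x)⁻¹ * deriv Φ (x / (1 + s * x))
        + ((1 + s * x) ^ 2)⁻¹ * deriv (deriv Φ) (x / (1 + s * x))) x := by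
  refine (((hasDerivAt_one_add_mul.const_mul (2 * s)).mul
    (hasDerivAt_comp_div_one_add_mul hΦ hx)).add
    (hasDerivAt_comp_div_one_add_mul hΦ' hx)).congr_deriv ?_
  field_simp

lemma hasDerivAt_sq_mul_comp_deriv_deriv (hΦ : DifferentiableAt ℝ Φ (x / (1 + s * x)))
    (hΦ' : DifferentiableAt ℝ (deriv Φ) (x / (1 + s * x)))
    (hΦ'' : DifferentiableAt ℝ (deriv (deriv Φ)) (x / (1 + s * x))) (hx : 1 + s * x ≠ 0) :
    HasDerivAt (fun y => 2 * s ^ 2 * Φ (y / (1 + s * y))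
        + 2 * s * (1 + s * y)⁻¹ * deriv Φ (y / (1 + s * y))
        + ((1 + s * y) ^ 2)⁻¹ * deriv (deriv Φ) (y / (1 + s * y)))
      (((1 + s * x) ^ 4)⁻¹ * deriv (deriv (deriv Φ)) (x / (1 + s * x))) x := by
  refine ((((hasDerivAt_comp_div_one_add_mul hΦ hx).const_mul (2 * s ^ 2)).add
    (((hasDerivAt_one_add_mul.inv hx).const_mul (2 * s)).mul
      (hasDerivAt_comp_div_one_add_mul hΦ' hx))).add
    (((hasDerivAt_one_add_mul.pow 2).inv (pow_ne_zero 2 hx)).mul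
      (hasDerivAt_comp_div_one_add_mul hΦ'' hx))).congr_deriv ?_
  simp only [Pi.inv_apply, Pi.pow_apply]
  field_simp
  ring

theorem deriv_deriv_deriv_sq_mul_comp (h₀ : Differentiable ℝ Φ)
    (h₁ : Differentiable ℝ (deriv Φ)) (h₂ : Differentiable ℝ (deriv (deriv Φ)))
    (hx : 1 + s * x ≠ 0) :
    deriv (deriv (deriv fun y => (1 + s * y) ^ 2 * Φ (y / (1 + s * y)))) x
      = ((1 + s * x) ^ 4)⁻¹ * deriv (deriv (deriv Φ)) (x / (1 + s * x)) := by
  have hnear : ∀ᶠ y in 𝓝 x, 1 + s * y ≠ 0 :=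
    hasDerivAt_one_add_mul.continuousAt.eventually_ne hx
  have hd₂ : deriv (deriv fun y => (1 + s * y) ^ 2 * Φ (y / (1 + s * y)))
      =ᶠ[𝓝 x] fun y => 2 * s ^ 2 * Φ (y / (1 + s * y))
        + 2 * s * (1 + s * y)⁻¹ * deriv Φ (y / (1 + s * y))
        + ((1 + s * y) ^ 2)⁻¹ * deriv (deriv Φ) (y / (1 + s * y)) := by
    have hd₁ : deriv (fun y => (1 + s * y) ^ 2 * Φ (y / (1 + s * y)))
        =ᶠ[𝓝 x] fun y =>
          2 * s * (1 + s * y) * Φ (y / (1 + s * y)) + deriv Φ (y / (1 + s * y)) :=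
      hnear.mono fun y hy => (hasDerivAt_sq_mul_comp (h₀ _) hy).deriv
    exact hd₁.deriv.trans <|
      hnear.mono fun y hy => (hasDerivAt_sq_mul_comp_deriv (h₀ _) (h₁ _) hy).deriv
  rw [hd₂.deriv_eq]
  exact (hasDerivAt_sq_mul_comp_deriv_deriv (h₀ _) (h₁ _) (h₂ _) hx).deriv

lemma contDiffOn_inv_pow_four_mul_comp {n : WithTop ℕ∞} {u : ℝ → ℝ → ℝ}
    (hu : ContDiff ℝ n (Function.uncurry u)) :
    ContDiffOn ℝ n (fun p : ℝ × ℝ => ((1 + s * p.2) ^ 4)⁻¹ * u p.1 (p.2 / (1 + s * p.2)))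
      {p | 1 + s * p.2 ≠ 0} := by
  have hlin : ContDiff ℝ n fun p : ℝ × ℝ => 1 + s * p.2 :=
    contDiff_const.add (contDiff_const.mul contDiff_snd)
  refine ((hlin.pow 4).contDiffOn.inv fun p hp => pow_ne_zero 4 hp).mul ?_
  exact hu.comp_contDiffOn (contDiff_fst.contDiffOn.prodMk
    (contDiff_snd.contDiffOn.div hlin.contDiffOn fun p hp => hp))

end Conformal

open Conformal

lemma inv_pow_four_mul_rpow_neg_half (a : ℝ) {U : ℝ} (hU : 0 ≤ U) :
    ((a ^ 4)⁻¹ * U) ^ (-(1 : ℝ) / 2) = a ^ 2 * U ^ (-(1 : ℝ) / 2) := by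
  have h : (a ^ 4)⁻¹ = ((a ^ 2) ^ (2 : ℝ))⁻¹ := by rw [rpow_two, ← pow_mul]
  rw [mul_rpow (by positivity) hU, h, inv_rpow (by positivity), ← rpow_mul (by positivity),
    ← rpow_neg (by positivity)]
  norm_num

/-- Table 1, Case 4: the conformal symmetry (finite form of `x²∂_x - 4xu∂_u`)
of the equation `u_t + (u^{-1/2})_xxx = 0`. -/
theorem conformal_symmetry_n_neg_half
    (s : ℝ)
    (Ω : Set (ℝ × ℝ)) (hΩ : Ω = {p : ℝ × ℝ | 0 < 1 + s * p.2})
    (u : ℝ → ℝ → ℝ) (hu : ContDiff ℝ (⊤ : ℕ∞) (Function.uncurry u))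
    (hupos : ∀ t x : ℝ, 0 < u t x)
    (hupde : ∀ t x : ℝ,
      pdT u t x + pdX3 (fun t x => u t x ^ (-(1 : ℝ) / 2)) t x = 0)
    (v : ℝ → ℝ → ℝ)
    (hv : ∀ t x : ℝ, v t x = ((1 + s * x) ^ (4 : ℕ))⁻¹ * u t (x / (1 + s * x))) :
    ContDiffOn ℝ (⊤ : ℕ∞) (Function.uncurry v) Ω ∧ (∀ p ∈ Ω, 0 < v p.1 p.2) ∧
      ∀ p ∈ Ω,
        pdT v p.1 p.2 + pdX3 (fun t x => v t x ^ (-(1 : ℝ) / 2)) p.1 p.2 = 0 := by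
  subst hΩ
  refine ⟨?_, fun p hp => ?_, fun ⟨t, x⟩ hx => ?_⟩
  · rw [show Function.uncurry v = _ from funext fun p => hv p.1 p.2]
    exact (contDiffOn_inv_pow_four_mul_comp hu).mono fun p hp => ne_of_gt hp
  · have : 0 < 1 + s * p.2 := hp
    rw [hv]
    exact mul_pos (by positivity) (hupos _ _)
  · have hΦ : ContDiff ℝ (⊤ : ℕ∞) fun y => u t y ^ (-(1 : ℝ) / 2) :=
      contDiff_iff_contDiffAt.2 fun y =>
        (hu.comp (contDiff_const.prodMk contDiff_id)).contDiffAt.rpow_const_of_ne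
          (hupos t y).ne'
    have hT : pdT v t x = ((1 + s * x) ^ 4)⁻¹ * pdT u t (x / (1 + s * x)) := by
      simp only [pdT, hv, deriv_const_mul_field']
    have hX : pdX3 (fun t x => v t x ^ (-(1 : ℝ) / 2)) t x
        = ((1 + s * x) ^ 4)⁻¹
          * pdX3 (fun t x => u t x ^ (-(1 : ℝ) / 2)) t (x / (1 + s * x)) := by
      -- `v t y ^ (-1/2) = (1 + s*y)^2 * u t (y/(1 + s*y)) ^ (-1/2)` holds for every `y`:
      -- where `1 + s*y = 0` both sides are junk zeros.
      simp only [pdX3, hv, inv_pow_four_mul_rpow_neg_half _ (hupos _ _).le]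
      exact deriv_deriv_deriv_sq_mul_comp (hΦ.differentiable (by simp))
        ((hΦ.iterate_deriv 1).differentiable (by simp))
        ((hΦ.iterate_deriv 2).differentiable (by simp)) (ne_of_gt hx)
    rw [hT, hX, ← mul_add, hupde, mul_zero]
end

section
/- (Table 1, Case 8: extra scaling symmetry when m = (n+2)/3 and f(t) = t².) Let n ∈ ℝ with n ≠ 0 and n ≠ 1, set m = (n + 2)/3, let ε = ±1, and let λ > 0. Suppose u : ℝ → ℝ → ℝ is smooth, positive on (0,∞) × ℝ, and satisfies ∂_t u + ε ∂_x(u^m) + t² ∂_x^3(u^n) = 0 for all t > 0, x ∈ ℝ. Then the function v defined by v(t, x) = u(t/λ, x/λ) is smooth, positive, and satisfies the same equation ∂_t v + ε ∂_x(v^m) + t² ∂_x^3(v^n) = 0 for all t > 0, x ∈ ℝ. (This is the one-parameter group generated by t ∂_t + x ∂_x.) -/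
/-!
Under `(t, x) ↦ (t / λ, x / λ)` each of `∂_t`, `∂_x` picks up a factor `λ⁻¹` and `∂_x³` a factor
`λ⁻³`, while the coefficient `t²` becomes `λ² (t / λ)²`. Hence every term of the equation for `v`
at `(t, x)` is `λ⁻¹` times the corresponding term for `u` at `(t / λ, x / λ)`. The chain rule for
a linear change of variable holds for Mathlib's `deriv` even where the function is not
differentiable (both sides are then `0`), so no regularity enters this computation.
-/

open Real

theorem deriv_iterate_comp_mul_left {𝕜 : Type*} [NontriviallyNormedField 𝕜] (c : 𝕜)
    (f : 𝕜 → 𝕜) (k : ℕ) :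
    deriv^[k] (fun x => f (c * x)) = fun x => c ^ k * deriv^[k] f (c * x) := by
  induction k with
  | zero => simp
  | succ k ih =>
    funext x
    rw [Function.iterate_succ_apply', ih, deriv_const_mul_field']
    beta_reduce
    rw [deriv_comp_mul_left, Function.iterate_succ_apply', smul_eq_mul, pow_succ, mul_assoc]

theorem deriv_iterate_comp_div_const {𝕜 : Type*} [NontriviallyNormedField 𝕜] (c : 𝕜)
    (f : 𝕜 → 𝕜) (k : ℕ) (x : 𝕜) :
    deriv^[k] (fun y => f (y / c)) x = deriv^[k] f (x / c) / c ^ k := by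
  simpa only [inv_mul_eq_div, inv_pow, ← div_eq_inv_mul] using
    congrFun (deriv_iterate_comp_mul_left c⁻¹ f k) x

noncomputable def kmnResidual (ε m n : ℝ) (u : ℝ → ℝ → ℝ) (t x : ℝ) : ℝ :=
  pdT u t x + ε * pdX (fun t x => u t x ^ m) t x + t ^ 2 * pdX3 (fun t x => u t x ^ n) t x

theorem kmnResidual_comp_div_const (ε m n : ℝ) (u : ℝ → ℝ → ℝ) {c : ℝ} (hc : c ≠ 0) (t x : ℝ) :
    kmnResidual ε m n (fun t x => u (t / c) (x / c)) t x
      = kmnResidual ε m n u (t / c) (x / c) / c := by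
  have hT : deriv (fun s => u (s / c) (x / c)) t = deriv (fun s => u s (x / c)) (t / c) / c ^ 1 :=
    deriv_iterate_comp_div_const c (fun s => u s (x / c)) 1 t
  have hX : deriv (fun y => u (t / c) (y / c) ^ m) x
      = deriv (fun y => u (t / c) y ^ m) (x / c) / c ^ 1 :=
    deriv_iterate_comp_div_const c (fun y => u (t / c) y ^ m) 1 x
  have hX3 : deriv (deriv (deriv fun y => u (t / c) (y / c) ^ n)) x
      = deriv (deriv (deriv fun y => u (t / c) y ^ n)) (x / c) / c ^ 3 :=
    deriv_iterate_comp_div_const c (fun y => u (t / c) y ^ n) 3 x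
  simp only [kmnResidual, pdT, pdX, pdX3]
  rw [hT, hX, hX3]
  field_simp

theorem extra_scaling_symmetry_f_t_squared_general
    (n : ℝ) (m : ℝ)
    (ε : ℝ) (lam : ℝ) (hlam : 0 < lam)
    (u : ℝ → ℝ → ℝ) (hu : ContDiff ℝ (⊤ : ℕ∞) (Function.uncurry u))
    (hupos : ∀ t x : ℝ, 0 < t → 0 < u t x)
    (hupde : ∀ t x : ℝ, 0 < t →
      pdT u t x + ε * pdX (fun t x => u t x ^ m) t x
        + t ^ 2 * pdX3 (fun t x => u t x ^ n) t x = 0)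
    (v : ℝ → ℝ → ℝ) (hv : ∀ t x : ℝ, v t x = u (t / lam) (x / lam)) :
    ContDiff ℝ (⊤ : ℕ∞) (Function.uncurry v) ∧ (∀ t x : ℝ, 0 < t → 0 < v t x) ∧
      ∀ t x : ℝ, 0 < t →
        pdT v t x + ε * pdX (fun t x => v t x ^ m) t x
          + t ^ 2 * pdX3 (fun t x => v t x ^ n) t x = 0 := by
  obtain rfl : v = fun t x => u (t / lam) (x / lam) := funext₂ hv
  refine ⟨hu.comp ((contDiff_fst.div_const lam).prodMk (contDiff_snd.div_const lam)),
    fun t x ht => hupos _ _ (div_pos ht hlam), fun t x ht => ?_⟩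
  have hscaled := kmnResidual_comp_div_const ε m n u hlam.ne' t x
  rw [kmnResidual, kmnResidual, hupde _ _ (div_pos ht hlam), zero_div] at hscaled
  exact hscaled

/-- Table 1, Case 8: the extra scaling symmetry generated by `t∂_t + x∂_x`
when `m = (n+2)/3` and `f(t) = t²`. -/
theorem extra_scaling_symmetry_f_t_squared
    (n : ℝ) (hn : n ≠ 0) (hn1 : n ≠ 1) (m : ℝ) (hm : m = (n + 2) / 3)
    (ε : ℝ) (hε : ε = 1 ∨ ε = -1) (lam : ℝ) (hlam : 0 < lam)
    (u : ℝ → ℝ → ℝ) (hu : ContDiff ℝ (⊤ : ℕ∞) (Function.uncurry u))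
    (hupos : ∀ t x : ℝ, 0 < t → 0 < u t x)
    (hupde : ∀ t x : ℝ, 0 < t →
      pdT u t x + ε * pdX (fun t x => u t x ^ m) t x
        + t ^ 2 * pdX3 (fun t x => u t x ^ n) t x = 0)
    (v : ℝ → ℝ → ℝ) (hv : ∀ t x : ℝ, v t x = u (t / lam) (x / lam)) :
    ContDiff ℝ (⊤ : ℕ∞) (Function.uncurry v) ∧ (∀ t x : ℝ, 0 < t → 0 < v t x) ∧
      ∀ t x : ℝ, 0 < t →
        pdT v t x + ε * pdX (fun t x => v t x ^ m) t x
          + t ^ 2 * pdX3 (fun t x => v t x ^ n) t x = 0 :=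
  extra_scaling_symmetry_f_t_squared_general n m ε lam hlam u hu hupos hupde v hv
end

section
/- (Similarity reduction of u_t + ε(u²)_x + t^k u_xxx = 0 for general k.) Let ε = ±1 and k ∈ ℝ, and let φ : ℝ → ℝ be a C³ function satisfying the ODE 3φ'''(ω) + 6ε·φ(ω)·φ'(ω) - (k+1)·ω·φ'(ω) + (k-2)·φ(ω) = 0 for all ω ∈ ℝ. Then the function u defined for t > 0, x ∈ ℝ by u(t, x) = t^{(k-2)/3} · φ(x · t^{-(k+1)/3}) satisfies ∂_t u + ε ∂_x(u²) + t^k ∂_x^3 u = 0 for all t > 0, x ∈ ℝ. (Here real powers of t are interpreted via Real.rpow.) -/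
open Real

noncomputable def similarityAnsatz (a b : ℝ) (φ : ℝ → ℝ) (t x : ℝ) : ℝ := t ^ a * φ (x * t ^ b)

section SimilarityAnsatz

variable {a b t : ℝ} {φ : ℝ → ℝ}

lemma pdT_similarityAnsatz (hφ : Differentiable ℝ φ) (ht : 0 < t) (x : ℝ) :
    pdT (similarityAnsatz a b φ) t x =
      t ^ (a - 1) * (a * φ (x * t ^ b) + b * (x * t ^ b) * deriv φ (x * t ^ b)) := by
  have hpow : ∀ p : ℝ, HasDerivAt (fun s : ℝ => s ^ p) (p * t ^ (p - 1)) t := fun p =>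
    hasDerivAt_rpow_const (Or.inl ht.ne')
  have hprofile : HasDerivAt (fun s => φ (x * s ^ b))
      (deriv φ (x * t ^ b) * (x * (b * t ^ (b - 1)))) t :=
    (hφ _).hasDerivAt.comp t ((hpow b).const_mul x)
  have hexp : t ^ a * t ^ (b - 1) = t ^ (a - 1) * t ^ b := by
    rw [← rpow_add ht, ← rpow_add ht]; ring_nf
  unfold pdT similarityAnsatz
  rw [((hpow a).fun_mul hprofile).deriv]
  linear_combination (b * x * deriv φ (x * t ^ b)) * hexp

lemma pdX_sq_similarityAnsatz (hφ : Differentiable ℝ φ) (ht : 0 < t) (x : ℝ) :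
    pdX (fun t x => similarityAnsatz a b φ t x ^ 2) t x =
      2 * t ^ (2 * a + b) * φ (x * t ^ b) * deriv φ (x * t ^ b) := by
  have hslice : HasDerivAt (fun y => similarityAnsatz a b φ t y)
      (t ^ a * (deriv φ (x * t ^ b) * t ^ b)) x :=
    ((hφ _).hasDerivAt.comp x ((hasDerivAt_id x).mul_const _)).const_mul _ |>.congr_deriv
      (by simp)
  have hexp : t ^ (2 * a + b) = t ^ a * t ^ a * t ^ b := by
    rw [← rpow_add ht, ← rpow_add ht]; ring_nf
  rw [pdX, (hslice.fun_pow 2).deriv, hexp, similarityAnsatz]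
  push_cast
  ring

lemma pdX3_similarityAnsatz (hφ : ContDiff ℝ 3 φ) (ht : 0 < t) (x : ℝ) :
    pdX3 (similarityAnsatz a b φ) t x = t ^ (a + 3 * b) * iteratedDeriv 3 φ (x * t ^ b) := by
  have hexp : t ^ (a + 3 * b) = t ^ a * (t ^ b) ^ 3 := by
    rw [rpow_add ht, mul_comm 3 b, rpow_mul ht.le]; norm_cast
  have hslice : (fun y => similarityAnsatz a b φ t y) = fun y => t ^ a * φ (t ^ b * y) := by
    funext y; rw [similarityAnsatz, mul_comm y]
  have hiter : ∀ f : ℝ → ℝ, deriv (deriv (deriv f)) = iteratedDeriv 3 f := fun f => by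
    rw [iteratedDeriv_eq_iterate]; rfl
  rw [pdX3, hiter, hslice, iteratedDeriv_const_mul_field, iteratedDeriv_comp_const_mul hφ, hexp,
    mul_comm x]
  ring

end SimilarityAnsatz

theorem similarity_reduction_tk_general
    (ε : ℝ) (k : ℝ)
    (φ : ℝ → ℝ) (hφ : ContDiff ℝ 3 φ)
    (hode : ∀ ω : ℝ,
      3 * iteratedDeriv 3 φ ω + 6 * ε * φ ω * deriv φ ω
        - (k + 1) * ω * deriv φ ω + (k - 2) * φ ω = 0)
    (u : ℝ → ℝ → ℝ)
    (hu : ∀ t x : ℝ, u t x = t ^ ((k - 2) / 3) * φ (x * t ^ (-(k + 1) / 3))) :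
    ∀ t x : ℝ, 0 < t →
      pdT u t x + ε * pdX (fun t x => u t x ^ 2) t x + t ^ k * pdX3 u t x = 0 := by
  intro t x ht
  obtain rfl : u = similarityAnsatz ((k - 2) / 3) (-(k + 1) / 3) φ := funext₂ hu
  have hφ₁ : Differentiable ℝ φ := hφ.differentiable (by norm_num)
  rw [pdT_similarityAnsatz hφ₁ ht, pdX_sq_similarityAnsatz hφ₁ ht, pdX3_similarityAnsatz hφ ht]
  -- The exponents of `Γ₃` give all three terms the common factor `t^((k-5)/3)`.
  have hsq : t ^ (2 * ((k - 2) / 3) + -(k + 1) / 3) = t ^ ((k - 2) / 3 - 1) := by ring_nf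
  have hdisp : t ^ k * t ^ ((k - 2) / 3 + 3 * (-(k + 1) / 3)) = t ^ ((k - 2) / 3 - 1) := by
    rw [← rpow_add ht]; ring_nf
  set ω := x * t ^ (-(k + 1) / 3)
  linear_combination (t ^ ((k - 2) / 3 - 1) / 3) * hode ω
    + (2 * ε * φ ω * deriv φ ω) * hsq + iteratedDeriv 3 φ ω * hdisp

/-- Similarity reduction of `u_t + ε(u²)_x + t^k u_xxx = 0` via the ansatz
`u = t^{(k-2)/3} φ(x t^{-(k+1)/3})`. -/
theorem similarity_reduction_tk
    (ε : ℝ) (hε : ε = 1 ∨ ε = -1) (k : ℝ)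
    (φ : ℝ → ℝ) (hφ : ContDiff ℝ 3 φ)
    (hode : ∀ ω : ℝ,
      3 * iteratedDeriv 3 φ ω + 6 * ε * φ ω * deriv φ ω
        - (k + 1) * ω * deriv φ ω + (k - 2) * φ ω = 0)
    (u : ℝ → ℝ → ℝ)
    (hu : ∀ t x : ℝ, u t x = t ^ ((k - 2) / 3) * φ (x * t ^ (-(k + 1) / 3))) :
    ∀ t x : ℝ, 0 < t →
      pdT u t x + ε * pdX (fun t x => u t x ^ 2) t x + t ^ k * pdX3 u t x = 0 :=
  similarity_reduction_tk_general ε k φ hφ hode u hu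
end

section
/- (Section 4: similarity reduction of the K(m,n) equation with f(t) = t^k used in the boundary value problem.) Let m, n, k ∈ ℝ with n ≠ 0 and 3m - n - 2 ≠ 0, let ε = ±1, set p = (k - 2)/(3m - n - 2) and q = (km - k + m - n)/(3m - n - 2), and let φ : ℝ → ℝ be a C³ positive function satisfying the ODE (φ^n)'''(ω) + ε·(φ^m)'(ω) - q·ω·φ'(ω) + p·φ(ω) = 0 for all ω ∈ ℝ (where φ^n, φ^m denote real powers via Real.rpow and primes denote derivatives in ω). Then the function u defined for t > 0, x ∈ ℝ by u(t, x) = t^{p} · φ(x · t^{-q}) is positive and satisfies ∂_t u + ε ∂_x(u^m) + t^k ∂_x^3(u^n) = 0 for all t > 0, x ∈ ℝ. -/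
open Real

/-!
Along the self-similar ansatz `u = t^p φ(x t^{-q})` every `x`-derivative costs a factor `t^{-q}`
and the `t`-derivative is `t^{p-1} (p φ - q ω φ')`. With the given `p` and `q` the exponents
`p m - q` and `k + p n - 3 q` both equal `p - 1`, so the three terms of the PDE share the factor
`t^{p-1}` and what remains is the profile ODE evaluated at `ω = x t^{-q}`.
-/

lemma pdX_eq_iteratedDeriv_one (u : ℝ → ℝ → ℝ) (t x : ℝ) :
    pdX u t x = iteratedDeriv 1 (fun y => u t y) x := by
  rw [pdX, iteratedDeriv_one]

lemma pdX3_eq_iteratedDeriv_three (u : ℝ → ℝ → ℝ) (t x : ℝ) :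
    pdX3 u t x = iteratedDeriv 3 (fun y => u t y) x := by
  rw [pdX3, iteratedDeriv_eq_iterate]
  rfl

lemma iteratedDeriv_const_mul_comp_const_mul {𝕜 : Type*} [NontriviallyNormedField 𝕜] {j : ℕ}
    {g : 𝕜 → 𝕜} (hg : ContDiff 𝕜 j g) (a c x : 𝕜) :
    iteratedDeriv j (fun y => a * g (c * y)) x = a * c ^ j * iteratedDeriv j g (c * x) := by
  rw [iteratedDeriv_const_mul_field, iteratedDeriv_comp_const_mul hg, mul_assoc]

section SelfSimilar

variable {p q t : ℝ} {φ : ℝ → ℝ}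

lemma hasDerivAt_selfSimilar_time (ht : 0 < t) (x : ℝ)
    (hφ : DifferentiableAt ℝ φ (x * t ^ (-q))) :
    HasDerivAt (fun s => s ^ p * φ (x * s ^ (-q)))
      (t ^ (p - 1) * (p * φ (x * t ^ (-q)) - q * (x * t ^ (-q)) * deriv φ (x * t ^ (-q)))) t := by
  have hpow : ∀ r : ℝ, HasDerivAt (fun s : ℝ => s ^ r) (r * t ^ (r - 1)) t := fun r =>
    hasDerivAt_rpow_const (Or.inl ht.ne')
  have hprofile := hφ.hasDerivAt.comp t ((hpow (-q)).const_mul x)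
  refine ((hpow p).mul hprofile).congr_deriv ?_
  have hsplit : t ^ p * t ^ (-q - 1) = t ^ (p - 1) * t ^ (-q) := by
    rw [← rpow_add ht, ← rpow_add ht]
    ring_nf
  rw [Function.comp_apply]
  linear_combination (q * x * deriv φ (x * t ^ (-q))) * hsplit.symm

lemma iteratedDeriv_rpow_selfSimilar (ht : 0 < t) (hφ : ∀ ω, 0 ≤ φ ω) {r : ℝ} {j : ℕ}
    (hφr : ContDiff ℝ j (fun ω => φ ω ^ r)) (x : ℝ) :
    iteratedDeriv j (fun y => (t ^ p * φ (y * t ^ (-q))) ^ r) x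
      = t ^ (p * r - j * q) * iteratedDeriv j (fun ω => φ ω ^ r) (x * t ^ (-q)) := by
  have hfun : (fun y => (t ^ p * φ (y * t ^ (-q))) ^ r)
      = fun y => t ^ (p * r) * (fun ω => φ ω ^ r) (t ^ (-q) * y) := by
    funext y
    rw [mul_rpow (rpow_nonneg ht.le p) (hφ _), ← rpow_mul ht.le, mul_comm y]
  have hscale : t ^ (p * r) * (t ^ (-q)) ^ j = t ^ (p * r - j * q) := by
    rw [← rpow_natCast, ← rpow_mul ht.le, ← rpow_add ht]
    ring_nf
  rw [hfun, iteratedDeriv_const_mul_comp_const_mul hφr, hscale, mul_comm x]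

end SelfSimilar

lemma similarity_exponents {m n k p q : ℝ} (hden : 3 * m - n - 2 ≠ 0)
    (hp : p = (k - 2) / (3 * m - n - 2)) (hq : q = (k * m - k + m - n) / (3 * m - n - 2)) :
    p * m - q = p - 1 ∧ k + (p * n - 3 * q) = p - 1 := by
  subst hp hq
  constructor <;> field_simp <;> ring

theorem similarity_reduction_Kmn_tk_general
    (m n k : ℝ) (hden : 3 * m - n - 2 ≠ 0)
    (ε : ℝ)
    (p q : ℝ) (hp : p = (k - 2) / (3 * m - n - 2))
    (hq : q = (k * m - k + m - n) / (3 * m - n - 2))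
    (φ : ℝ → ℝ) (hφ : ContDiff ℝ 3 φ) (hφpos : ∀ ω : ℝ, 0 < φ ω)
    (hode : ∀ ω : ℝ,
      iteratedDeriv 3 (fun ω => φ ω ^ n) ω + ε * deriv (fun ω => φ ω ^ m) ω
        - q * ω * deriv φ ω + p * φ ω = 0)
    (u : ℝ → ℝ → ℝ)
    (hu : ∀ t x : ℝ, u t x = t ^ p * φ (x * t ^ (-q))) :
    (∀ t x : ℝ, 0 < t → 0 < u t x) ∧
      ∀ t x : ℝ, 0 < t →
        pdT u t x + ε * pdX (fun t x => u t x ^ m) t x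
          + t ^ k * pdX3 (fun t x => u t x ^ n) t x = 0 := by
  refine ⟨fun t x ht => hu t x ▸ mul_pos (rpow_pos_of_pos ht p) (hφpos _), fun t x ht => ?_⟩
  have hφnn : ∀ ω, 0 ≤ φ ω := fun ω => (hφpos ω).le
  have hφr : ∀ r : ℝ, ContDiff ℝ 3 (fun ω => φ ω ^ r) := fun r =>
    hφ.rpow_const_of_ne fun ω => (hφpos ω).ne'
  obtain ⟨hexp_m, hexp_n⟩ := similarity_exponents hden hp hq
  have hT : pdT u t x = t ^ (p - 1) * (p * φ (x * t ^ (-q))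
      - q * (x * t ^ (-q)) * deriv φ (x * t ^ (-q))) := by
    simp only [pdT, hu]
    exact (hasDerivAt_selfSimilar_time ht x (hφ.differentiable (by norm_num) _)).deriv
  have hX : pdX (fun t x => u t x ^ m) t x
      = t ^ (p - 1) * deriv (fun ω => φ ω ^ m) (x * t ^ (-q)) := by
    simp only [pdX_eq_iteratedDeriv_one, hu]
    rw [iteratedDeriv_rpow_selfSimilar ht hφnn ((hφr m).of_le (by norm_num)),
      iteratedDeriv_one, Nat.cast_one, one_mul, hexp_m]
  have hX3 : t ^ k * pdX3 (fun t x => u t x ^ n) t x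
      = t ^ (p - 1) * iteratedDeriv 3 (fun ω => φ ω ^ n) (x * t ^ (-q)) := by
    simp only [pdX3_eq_iteratedDeriv_three, hu]
    rw [iteratedDeriv_rpow_selfSimilar ht hφnn (hφr n), ← mul_assoc, ← rpow_add ht]
    norm_num [hexp_n]
  rw [hT, hX, add_assoc, hX3]
  linear_combination t ^ (p - 1) * hode (x * t ^ (-q))

/-- Section 4: similarity reduction of the K(m,n) equation with `f(t) = t^k`
via the ansatz `u = t^p φ(x t^{-q})`, `p = (k-2)/(3m-n-2)`, `q = (km-k+m-n)/(3m-n-2)`. -/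
theorem similarity_reduction_Kmn_tk
    (m n k : ℝ) (hn : n ≠ 0) (hden : 3 * m - n - 2 ≠ 0)
    (ε : ℝ) (hε : ε = 1 ∨ ε = -1)
    (p q : ℝ) (hp : p = (k - 2) / (3 * m - n - 2))
    (hq : q = (k * m - k + m - n) / (3 * m - n - 2))
    (φ : ℝ → ℝ) (hφ : ContDiff ℝ 3 φ) (hφpos : ∀ ω : ℝ, 0 < φ ω)
    (hode : ∀ ω : ℝ,
      iteratedDeriv 3 (fun ω => φ ω ^ n) ω + ε * deriv (fun ω => φ ω ^ m) ω
        - q * ω * deriv φ ω + p * φ ω = 0)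
    (u : ℝ → ℝ → ℝ)
    (hu : ∀ t x : ℝ, u t x = t ^ p * φ (x * t ^ (-q))) :
    (∀ t x : ℝ, 0 < t → 0 < u t x) ∧
      ∀ t x : ℝ, 0 < t →
        pdT u t x + ε * pdX (fun t x => u t x ^ m) t x
          + t ^ k * pdX3 (fun t x => u t x ^ n) t x = 0 :=
  similarity_reduction_Kmn_tk_general m n k hden ε p q hp hq φ hφ hφpos hode u hu
end
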